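/- Let α be a composition of n, let E be a ∼-equivalence class of SYRT(α) (all tableaux in E have the same distinguished removable cells), and let M be the largest column index containing a distinguished removable cell of the tableaux in E. If T ∈ E is a source tableau, then the distinguished removable cell in column M of T has entry n. -/

import Mathlib

open Classical

namespace YRS

/-- `α` is a composition of `n`: a list of positive integers summing to `n`. -/
def IsComposition (n : ℕ) (α : List ℕ) : Prop :=
  (∀ a ∈ α, 0 < a) ∧ α.sum = n

/-- The cell `κ = (c, r)` (column `c`, row `r`, both 1-indexed, French notation)
belongs to the diagram `D(α)`. -/
def inDiagram (α : List ℕ) (κ : ℕ × ℕ) : Prop :=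
  1 ≤ κ.2 ∧ κ.2 ≤ α.length ∧ 1 ≤ κ.1 ∧ κ.1 ≤ α.getD (κ.2 - 1) 0

/-- `T` is a standard Young row-strict composition tableau of shape `α` (with entries
`1,…,n`), modelled as a total function on cells that vanishes off the diagram. -/
def IsSYRT (n : ℕ) (α : List ℕ) (T : ℕ × ℕ → ℕ) : Prop :=
  (∀ κ, ¬ inDiagram α κ → T κ = 0) ∧
  (∀ κ, inDiagram α κ → 1 ≤ T κ ∧ T κ ≤ n) ∧
  (∀ κ κ', inDiagram α κ → inDiagram α κ' → T κ = T κ' → κ = κ') ∧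
  (∀ v, 1 ≤ v → v ≤ n → ∃ κ, inDiagram α κ ∧ T κ = v) ∧
  (∀ c r, inDiagram α (c, r) → inDiagram α (c + 1, r) → T (c, r) < T (c + 1, r)) ∧
  (∀ r r', inDiagram α (1, r) → inDiagram α (1, r') → r < r' → T (1, r) < T (1, r')) ∧
  (∀ c r r', r' < r → inDiagram α (c, r) → inDiagram α (c + 1, r') →
      T (c, r) < T (c + 1, r') → inDiagram α (c + 1, r) ∧ T (c + 1, r) < T (c + 1, r'))

/-- The cell of `T` containing the entry `v` (junk value `(0,0)` if there is none). -/
noncomputable def cellOf (α : List ℕ) (T : ℕ × ℕ → ℕ) (v : ℕ) : ℕ × ℕ :=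
  if h : ∃ κ, inDiagram α κ ∧ T κ = v then h.choose else (0, 0)

/-- The filling obtained from `T` by exchanging the entries `i` and `i+1`. -/
def swapFun (i : ℕ) (T : ℕ × ℕ → ℕ) : ℕ × ℕ → ℕ := fun κ =>
  if T κ = i then i + 1 else if T κ = i + 1 then i else T κ

/-- The 0-Hecke operator `π_i` at the level of fillings:
`some T` if `i+1` is weakly left of `i`; `none` (i.e. `0`) if `i+1` is
right-adjacent to `i`; and `some (s_i T)` otherwise. -/
noncomputable def piFun (α : List ℕ) (i : ℕ) (T : ℕ × ℕ → ℕ) : Option (ℕ × ℕ → ℕ) :=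
  if (cellOf α T (i + 1)).1 ≤ (cellOf α T i).1 then some T
  else if cellOf α T (i + 1) = ((cellOf α T i).1 + 1, (cellOf α T i).2) then none
  else some (swapFun i T)

/-- The descent set of `T`: entries `i` (with `1 ≤ i ≤ n-1`) such that `i+1` lies in a
column strictly to the right of the column of `i`. -/
def DesSet (n : ℕ) (α : List ℕ) (T : ℕ × ℕ → ℕ) : Set ℕ :=
  {i | 1 ≤ i ∧ i < n ∧ (cellOf α T i).1 < (cellOf α T (i + 1)).1}

/-- `T ∼ T'`: in every column, the relative order (bottom to top) of the entries of `T`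
agrees with that of `T'`. -/
def simRel (α : List ℕ) (T T' : ℕ × ℕ → ℕ) : Prop :=
  ∀ c r r', inDiagram α (c, r) → inDiagram α (c, r') →
    (T (c, r) < T (c, r') ↔ T' (c, r) < T' (c, r'))

/-- Entries of `T` increase from bottom to top in every column (membership in `E_0`). -/
def colsIncreasing (α : List ℕ) (T : ℕ × ℕ → ℕ) : Prop :=
  ∀ c r r', inDiagram α (c, r) → inDiagram α (c, r') → r < r' → T (c, r) < T (c, r')

/-- `T` is a source tableau of its `∼`-equivalence class: no `T' ≠ T` in the class of `T`
satisfies `π_i(T') = T` for some `i`. -/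
def IsSource (n : ℕ) (α : List ℕ) (T : ℕ × ℕ → ℕ) : Prop :=
  ¬ ∃ T', IsSYRT n α T' ∧ simRel α T' T ∧ T' ≠ T ∧
      ∃ i, 1 ≤ i ∧ i < n ∧ piFun α i T' = some T

/-- One step of the `π`-operators: `π_i(T) = S` (as a tableau) for some `i`. -/
def piStep (n : ℕ) (α : List ℕ) (T S : ℕ × ℕ → ℕ) : Prop :=
  ∃ i, 1 ≤ i ∧ i < n ∧ piFun α i T = some S

/-- `T ⪯ S`: `S` is obtained from `T` by a (possibly empty) sequence of `π`-operators. -/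
def preceq (n : ℕ) (α : List ℕ) : (ℕ × ℕ → ℕ) → (ℕ × ℕ → ℕ) → Prop :=
  Relation.ReflTransGen (piStep n α)

/-- Removable cell of `D(α)`: rightmost cell of the top row, or the rightmost cell of a
row of length at least 2 such that no higher row has exactly one fewer cell. -/
def Removable (α : List ℕ) (κ : ℕ × ℕ) : Prop :=
  inDiagram α κ ∧ κ.1 = α.getD (κ.2 - 1) 0 ∧
    (κ.2 = α.length ∨
      (2 ≤ α.getD (κ.2 - 1) 0 ∧
        ∀ r, κ.2 < r → r ≤ α.length → α.getD (r - 1) 0 + 1 ≠ α.getD (κ.2 - 1) 0))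

/-- A removable cell of `D(α)` containing the largest entry of `T` in its column. -/
def DistRemovable (α : List ℕ) (T : ℕ × ℕ → ℕ) (κ : ℕ × ℕ) : Prop :=
  Removable α κ ∧ ∀ r, inDiagram α (κ.1, r) → r ≠ κ.2 → T (κ.1, r) < T κ

/-- Simple composition: whenever `α_j ≥ α_i ≥ 2` with `i < j`, some `α_k` with
`i ≤ k ≤ j` equals `α_i - 1`. -/
def SimpleComp (α : List ℕ) : Prop :=
  ∀ i j, 1 ≤ i → i < j → j ≤ α.length → 2 ≤ α.getD (i - 1) 0 →
    α.getD (i - 1) 0 ≤ α.getD (j - 1) 0 →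
    ∃ k, i ≤ k ∧ k ≤ j ∧ α.getD (k - 1) 0 + 1 = α.getD (i - 1) 0

/-- Decrease the `i`-th part (1-indexed) of `α` by one, deleting it if it becomes `0`. -/
def reduceAt (α : List ℕ) (i : ℕ) : List ℕ :=
  if α.getD (i - 1) 0 = 1 then α.eraseIdx (i - 1)
  else α.set (i - 1) (α.getD (i - 1) 0 - 1)

/-- The number of columns of `D(α)`. -/
def width (α : List ℕ) : ℕ := α.foldr max 0

/-- Boundary cell: a cell of the first column, or a cell with no cell of `D(α)` strictly
above it in its own column or the column immediately to the left. -/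
def Boundary (α : List ℕ) (κ : ℕ × ℕ) : Prop :=
  inDiagram α κ ∧ (κ.1 = 1 ∨
    ∀ r, κ.2 < r → ¬ inDiagram α (κ.1, r) ∧ ¬ inDiagram α (κ.1 - 1, r))

/-- The boundary cells listed in order: up the first column, then rightwards (for each
column `c ≥ 2` there is at most one boundary cell). -/
noncomputable def boundaryList (α : List ℕ) : List (ℕ × ℕ) :=
  ((List.range α.length).map fun r => ((1 : ℕ), r + 1)) ++
    ((List.range (width α)).filterMap fun c =>
      if h : ∃ r, Boundary α (c + 2, r) then some ((c + 2, h.choose) : ℕ × ℕ) else none)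

/-- The highest cell of `D(α)` strictly below `κ` in the column immediately to the right
of `κ` that is not yet threaded (i.e. not in `S`), if any. -/
noncomputable def nextCell (α : List ℕ) (S : Finset (ℕ × ℕ)) (κ : ℕ × ℕ) :
    Option (ℕ × ℕ) :=
  if h : ∃ r, r < κ.2 ∧ inDiagram α (κ.1 + 1, r) ∧ (κ.1 + 1, r) ∉ S ∧
      ∀ r', r < r' → r' < κ.2 → inDiagram α (κ.1 + 1, r') → (κ.1 + 1, r') ∈ S
  then some ((κ.1 + 1, h.choose) : ℕ × ℕ) else none

/-- The thread starting at `κ`, given the set `S` of already threaded cells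
(`fuel` bounds the length). -/
noncomputable def threadAux (α : List ℕ) (S : Finset (ℕ × ℕ)) :
    ℕ → (ℕ × ℕ) → List (ℕ × ℕ)
  | 0, κ => [κ]
  | fuel + 1, κ =>
      κ ::
        (match nextCell α S κ with
          | none => []
          | some κ' => threadAux α S fuel κ')

/-- The threads of the given boundary cells, constructed iteratively. -/
noncomputable def threadsAux (α : List ℕ) :
    List (ℕ × ℕ) → Finset (ℕ × ℕ) → List (List (ℕ × ℕ))
  | [], _ => []
  | κ :: rest, S =>
      threadAux α S (width α) κ ::
        threadsAux α rest (S ∪ (threadAux α S (width α) κ).toFinset)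

/-- The threads of `D(α)`, in order. -/
noncomputable def threads (α : List ℕ) : List (List (ℕ × ℕ)) :=
  threadsAux α (boundaryList α) ∅

/-- Fill the threads with consecutive integers, each thread from its rightmost cell (the
last cell of the list) to its leftmost cell (the boundary cell). -/
noncomputable def fillAux : List (List (ℕ × ℕ)) → ℕ → (ℕ × ℕ) → ℕ
  | [], _, _ => 0
  | L :: rest, off, κ =>
      if κ ∈ L then off + L.length - L.idxOf κ else fillAux rest (off + L.length) κ

/-- The tableau `T_sup`: the `k`-th thread is filled with the next `|L_k|` consecutive
integers, from right to left. -/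
noncomputable def TsupFun (α : List ℕ) : ℕ × ℕ → ℕ :=
  fun κ => fillAux (threads α) 0 κ

/-- The row-by-row "superstandard" filling: row `r` gets the entries
`α_1 + ⋯ + α_{r-1} + 1, …, α_1 + ⋯ + α_r` from left to right. -/
noncomputable def rowFill (α : List ℕ) : ℕ × ℕ → ℕ :=
  fun κ => if inDiagram α κ then (α.take (κ.2 - 1)).sum + κ.1 else 0

/-- The type of standard Young row-strict composition tableaux of shape `α`. -/
def SYRTof (n : ℕ) (α : List ℕ) : Type :=
  {T : ℕ × ℕ → ℕ // IsSYRT n α T}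

/-- `π_i` applied to a basis vector of the free `ℂ`-vector space on `SYRT(α)`. -/
noncomputable def piVec (n : ℕ) (α : List ℕ) (i : ℕ) (T : SYRTof n α) :
    SYRTof n α →₀ ℂ :=
  match piFun α i T.val with
  | none => 0
  | some T' =>
      if h : IsSYRT n α T' then Finsupp.single (⟨T', h⟩ : SYRTof n α) 1 else 0

/-- The `ℂ`-linear extension of `π_i` to the free `ℂ`-vector space on `SYRT(α)`. -/
noncomputable def piOp (n : ℕ) (α : List ℕ) (i : ℕ) :
    (SYRTof n α →₀ ℂ) →ₗ[ℂ] (SYRTof n α →₀ ℂ) :=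
  Finsupp.lift (SYRTof n α →₀ ℂ) ℂ (SYRTof n α) (piVec n α i)

/-- The span `R_α^{E_0}` of the tableaux whose columns increase from bottom to top. -/
noncomputable def E0span (n : ℕ) (α : List ℕ) : Submodule ℂ (SYRTof n α →₀ ℂ) :=
  Submodule.span ℂ
    ((fun T : SYRTof n α => Finsupp.single T (1 : ℂ)) '' {T | colsIncreasing α T.val})

/-- Apply the operators `π_i` for `i` in the list `l` from left to right
(`piSeq α [i₁, i₂, …] T = ⋯ (π_{i₂} (π_{i₁} T))`), with `none` meaning `0`. -/
noncomputable def piSeq (α : List ℕ) (l : List ℕ) (T : ℕ × ℕ → ℕ) :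
    Option (ℕ × ℕ → ℕ) :=
  l.foldl (fun o i => o.bind (piFun α i)) (some T)

end YRS

namespace YRS

lemma mem_diagram (α : List ℕ) {c r : ℕ} (h1 : 1 ≤ r) (h2 : r ≤ α.length)
    (h3 : 1 ≤ c) (h4 : c ≤ α.getD (r - 1) 0) : inDiagram α (c, r) :=
  ⟨h1, h2, h3, h4⟩

/-- Order comparison under the value swap `i ↔ i+1`. -/
lemma swap_lt (i : ℕ) (T : ℕ × ℕ → ℕ) (κ κ' : ℕ × ℕ)
    (h1 : ¬(T κ = i ∧ T κ' = i + 1)) (h2 : ¬(T κ = i + 1 ∧ T κ' = i)) :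
    (swapFun i T κ < swapFun i T κ' ↔ T κ < T κ') := by
  unfold swapFun; split_ifs <;> omega

lemma swap_invol (i : ℕ) (T : ℕ × ℕ → ℕ) : swapFun i (swapFun i T) = T := by
  funext κ; unfold swapFun; split_ifs <;> omega

lemma cellOf_eq {n : ℕ} {α : List ℕ} {T : ℕ × ℕ → ℕ} (hT : IsSYRT n α T)
    {κ : ℕ × ℕ} {v : ℕ} (hκ : inDiagram α κ) (hv : T κ = v) :
    cellOf α T v = κ := by
  have hex : ∃ κ', inDiagram α κ' ∧ T κ' = v := ⟨κ, hκ, hv⟩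
  unfold cellOf
  rw [dif_pos hex]
  exact hT.2.2.1 _ _ hex.choose_spec.1 hκ (hex.choose_spec.2.trans hv.symm)

/-- If `T` is a source tableau and `i+1` lies strictly left of `i`, then the swap
`s_i T` must fail to be an SYRT, which forces the following configuration. -/
lemma source_obstruction (n : ℕ) (α : List ℕ) (T : ℕ × ℕ → ℕ)
    (hT : IsSYRT n α T) (hsrc : IsSource n α T)
    (i : ℕ) (hi1 : 1 ≤ i) (hi2 : i < n)
    (a b d e : ℕ)
    (hx : inDiagram α (a, b)) (hTx : T (a, b) = i)
    (hy : inDiagram α (d, e)) (hTy : T (d, e) = i + 1)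
    (hda : d < a) :
    d + 1 = a ∧ b < e ∧ (¬ inDiagram α (a, e) ∨ i + 1 < T (a, e)) := by
  by_contra hobs
  push_neg at hobs
  -- hobs : d + 1 = a → b < e → inDiagram α (a, e) ∧ T (a, e) ≤ i + 1
  have hinj := hT.2.2.1
  have hcell_i : ∀ κ, inDiagram α κ → T κ = i → κ = (a, b) :=
    fun κ hκ h => hinj κ (a, b) hκ hx (h.trans hTx.symm)
  have hcell_i1 : ∀ κ, inDiagram α κ → T κ = i + 1 → κ = (d, e) :=
    fun κ hκ h => hinj κ (d, e) hκ hy (h.trans hTy.symm)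
  -- the swapped filling is an SYRT
  have hT' : IsSYRT n α (swapFun i T) := by
    refine ⟨?_, ?_, ?_, ?_, ?_, ?_, ?_⟩
    · intro κ hκ
      have h0 := hT.1 κ hκ
      unfold swapFun; split_ifs <;> omega
    · intro κ hκ
      have hb := hT.2.1 κ hκ
      unfold swapFun; split_ifs <;> omega
    · intro κ κ' hκ hκ' h
      apply hinj κ κ' hκ hκ'
      unfold swapFun at h; split_ifs at h <;> omega
    · intro v h1 h2
      by_cases hvi : v = i
      · exact ⟨(d, e), hy, by unfold swapFun; split_ifs <;> omega⟩
      · by_cases hvi1 : v = i + 1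
        · exact ⟨(a, b), hx, by unfold swapFun; split_ifs <;> omega⟩
        · obtain ⟨κ, hκ, hκv⟩ := hT.2.2.2.1 v h1 h2
          exact ⟨κ, hκ, by unfold swapFun; split_ifs <;> omega⟩
    · intro c r h1 h2
      have horder := hT.2.2.2.2.1 c r h1 h2
      refine (swap_lt i T _ _ ?_ ?_).mpr horder
      · rintro ⟨p, q⟩
        have e1 := hcell_i _ h1 p
        have e2 := hcell_i1 _ h2 q
        rw [Prod.mk.injEq] at e1 e2
        omega
      · rintro ⟨p, q⟩
        rw [p, q] at horder; omega
    · intro r r' h1 h2 hlt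
      have horder := hT.2.2.2.2.2.1 r r' h1 h2 hlt
      refine (swap_lt i T _ _ ?_ ?_).mpr horder
      · rintro ⟨p, q⟩
        have e1 := hcell_i _ h1 p
        have e2 := hcell_i1 _ h2 q
        rw [Prod.mk.injEq] at e1 e2
        omega
      · rintro ⟨p, q⟩
        rw [p, q] at horder; omega
    · intro c r r' hrr h1 h2 hlt
      by_cases hc1 : T (c, r) = i + 1 ∧ T (c + 1, r') = i
      · obtain ⟨p, q⟩ := hc1
        have e1 := hcell_i1 _ h1 p
        have e2 := hcell_i _ h2 q
        rw [Prod.mk.injEq] at e1 e2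
        obtain ⟨hcd, hre⟩ := e1
        obtain ⟨hca, hrb⟩ := e2
        -- d = c, e = r, a = c+1, b = r'
        have hda' : d + 1 = a := by omega
        have hbe : b < e := by omega
        obtain ⟨hin, hle⟩ := hobs hda' hbe
        have hval_ne1 : T (a, e) ≠ i + 1 := by
          intro h
          have := hcell_i1 _ hin h
          rw [Prod.mk.injEq] at this; omega
        have hval_ne : T (a, e) ≠ i := by
          intro h
          have := hcell_i _ hin h
          rw [Prod.mk.injEq] at this; omega
        have hval : T (a, e) < i := by omega
        have hce : (c + 1, r) = (a, e) := by rw [Prod.mk.injEq]; omega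
        constructor
        · rw [hce]; exact hin
        · rw [hce]
          unfold swapFun
          split_ifs <;> omega
      · by_cases hc2 : T (c, r) = i ∧ T (c + 1, r') = i + 1
        · exfalso
          obtain ⟨p, q⟩ := hc2
          unfold swapFun at hlt
          split_ifs at hlt <;> omega
        · have hH : T (c, r) < T (c + 1, r') := (swap_lt i T _ _ hc2 hc1).mp hlt
          obtain ⟨hin2, hlt2⟩ := hT.2.2.2.2.2.2 c r r' hrr h1 h2 hH
          refine ⟨hin2, (swap_lt i T _ _ ?_ ?_).mpr hlt2⟩
          · rintro ⟨p, q⟩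
            have e1 := hcell_i _ hin2 p
            have e2 := hcell_i1 _ h2 q
            rw [Prod.mk.injEq] at e1 e2
            omega
          · rintro ⟨p, q⟩
            have e1 := hcell_i1 _ hin2 p
            have e2 := hcell_i _ h2 q
            rw [Prod.mk.injEq] at e1 e2
            omega
  -- values of the swap at the two special cells
  have v1 : swapFun i T (a, b) = i + 1 := by
    unfold swapFun; split_ifs <;> omega
  have v2 : swapFun i T (d, e) = i := by
    unfold swapFun; split_ifs <;> omega
  have c1 : cellOf α (swapFun i T) (i + 1) = (a, b) := cellOf_eq hT' hx v1
  have c2 : cellOf α (swapFun i T) i = (d, e) := cellOf_eq hT' hy v2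
  -- `i+1` is not right-adjacent to `i` in `T`
  have hne_adj : ¬((a, b) = (d + 1, e)) := by
    intro h
    rw [Prod.mk.injEq] at h
    obtain ⟨h1, h2⟩ := h
    have hx' : inDiagram α (d + 1, e) := by rw [← h1, ← h2]; exact hx
    have := hT.2.2.2.2.1 d e hy hx'
    have hTx' : T (d + 1, e) = i := by rw [← h1, ← h2]; exact hTx
    rw [hTy, hTx'] at this; omega
  -- π_i maps the swap back to T
  have hpi : piFun α i (swapFun i T) = some T := by
    unfold piFun
    rw [c1, c2]
    rw [if_neg (by simp; omega), if_neg (by simpa using hne_adj)]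
    rw [swap_invol]
  -- simRel
  have hsim : simRel α (swapFun i T) T := by
    intro c r r' h1 h2
    refine swap_lt i T _ _ ?_ ?_
    · rintro ⟨p, q⟩
      have e1 := hcell_i _ h1 p
      have e2 := hcell_i1 _ h2 q
      rw [Prod.mk.injEq] at e1 e2
      omega
    · rintro ⟨p, q⟩
      have e1 := hcell_i1 _ h1 p
      have e2 := hcell_i _ h2 q
      rw [Prod.mk.injEq] at e1 e2
      omega
  have hne : swapFun i T ≠ T := by
    intro h
    have := congrFun h (a, b)
    rw [v1, hTx] at this
    omega
  exact hsrc ⟨swapFun i T, hT', hsim, hne, i, hi1, hi2, hpi⟩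

end YRS
/-- If `T` is a source tableau and `M` is the largest column index
containing a distinguished removable cell of `T`, then the distinguished removable cell
of `T` in column `M` has entry `n`. -/
theorem stmt9 (n : ℕ) (α : List ℕ) (hα : YRS.IsComposition n α)
    (T : ℕ × ℕ → ℕ) (hT : YRS.IsSYRT n α T) (hsrc : YRS.IsSource n α T)
    (M : ℕ) (κ : ℕ × ℕ) (hκ : YRS.DistRemovable α T κ) (hκM : κ.1 = M)
    (hmax : ∀ κ', YRS.DistRemovable α T κ' → κ'.1 ≤ M) :
    T κ = n := by
  classical
  obtain ⟨Mc, q⟩ := κ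
  have hMc : Mc = M := hκM
  subst hMc
  obtain ⟨hκrem, hκmax⟩ := hκ
  have hκmax' : ∀ r, YRS.inDiagram α (Mc, r) → r ≠ q → T (Mc, r) < T (Mc, q) := hκmax
  have hκD : YRS.inDiagram α (Mc, q) := hκrem.1
  have hMαq : Mc = α.getD (q - 1) 0 := hκrem.2.1
  have hκcase : q = α.length ∨ (2 ≤ α.getD (q - 1) 0 ∧
      ∀ r, q < r → r ≤ α.length → α.getD (r - 1) 0 + 1 ≠ α.getD (q - 1) 0) := hκrem.2.2
  have hMc1 : 1 ≤ Mc := hκD.2.2.1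
  have hm := hT.2.1 _ hκD
  have hn : 0 < n := by omega
  obtain ⟨ν, hνD, hνn⟩ := hT.2.2.2.1 n hn (le_refl n)
  obtain ⟨cn, rn⟩ := ν
  have hcn1 : 1 ≤ cn := hνD.2.2.1
  have hrn1 : 1 ≤ rn := hνD.1
  have hrnlen : rn ≤ α.length := hνD.2.1
  have hcnle : cn ≤ α.getD (rn - 1) 0 := hνD.2.2.2
  have hpos' : ∀ r, 1 ≤ r → r ≤ α.length → 1 ≤ α.getD (r - 1) 0 := by
    intro r h1 h2
    have hlt : r - 1 < α.length := by omega
    rw [List.getD_eq_getElem α 0 hlt]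
    exact hα.1 _ (List.getElem_mem hlt)
  -- `n` is rightmost in its row
  have hrt : cn = α.getD (rn - 1) 0 := by
    by_contra h
    have hin : YRS.inDiagram α (cn + 1, rn) :=
      YRS.mem_diagram α hrn1 hrnlen (by omega) (by omega)
    have h1 := hT.2.2.2.2.1 cn rn hνD hin
    have h2 := (hT.2.1 _ hin).2
    rw [hνn] at h1
    omega
  -- the cell of `n` is removable
  have hrem : YRS.Removable α (cn, rn) := by
    refine ⟨hνD, hrt, ?_⟩
    show rn = α.length ∨ (2 ≤ α.getD (rn - 1) 0 ∧
      ∀ r, rn < r → r ≤ α.length → α.getD (r - 1) 0 + 1 ≠ α.getD (rn - 1) 0)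
    by_cases htop : rn = α.length
    · exact Or.inl htop
    · refine Or.inr ⟨?_, ?_⟩
      · rw [← hrt]
        by_contra h
        push_neg at h
        have hcn : cn = 1 := by omega
        subst hcn
        have hin : YRS.inDiagram α (1, rn + 1) :=
          YRS.mem_diagram α (by omega) (by omega) (le_refl 1)
            (hpos' (rn + 1) (by omega) (by omega))
        have h1 := hT.2.2.2.2.2.1 rn (rn + 1) hνD hin (by omega)
        have h2 := (hT.2.1 _ hin).2
        rw [hνn] at h1
        omega
      · intro r hr hrlen heq
        have hαr1 : 1 ≤ α.getD (r - 1) 0 := hpos' r (by omega) hrlen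
        have hin1 : YRS.inDiagram α (cn - 1, r) :=
          YRS.mem_diagram α (by omega) hrlen (by omega) (by omega)
        have hTle := (hT.2.1 _ hin1).2
        have hTne : T (cn - 1, r) ≠ n := by
          intro h
          have hh := hT.2.2.1 _ _ hin1 hνD (h.trans hνn.symm)
          rw [Prod.mk.injEq] at hh
          omega
        have hcc : cn - 1 + 1 = cn := by omega
        have htrip := hT.2.2.2.2.2.2 (cn - 1) r rn hr hin1
          (by rw [hcc]; exact hνD) (by rw [hcc, hνn]; omega)
        have hxx : cn - 1 + 1 ≤ α.getD (r - 1) 0 := htrip.1.2.2.2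
        omega
  have hdist2 : ∀ r, YRS.inDiagram α (cn, r) → r ≠ rn → T (cn, r) < T (cn, rn) := by
    intro r hr hne
    have h2 := (hT.2.1 _ hr).2
    have hTne : T (cn, r) ≠ n := by
      intro h
      have hh := hT.2.2.1 _ _ hr hνD (h.trans hνn.symm)
      rw [Prod.mk.injEq] at hh
      exact hne hh.2
    rw [hνn]
    omega
  have hdist : YRS.DistRemovable α T (cn, rn) := ⟨hrem, hdist2⟩
  have hcnM : cn ≤ Mc := hmax _ hdist
  by_cases hMcn : cn = Mc
  · subst hMcn
    by_cases hq : rn = q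
    · rw [← hq]; exact hνn
    · exfalso
      have h1 := hκmax' rn hνD hq
      have h2 := hdist2 q hκD (fun hh => hq hh.symm)
      omega
  · exfalso
    have hcnM' : cn < Mc := by omega
    -- the entry of κ is less than n
    have hmn : T (Mc, q) < n := by
      rcases eq_or_lt_of_le hm.2 with h | h
      · exfalso
        have heq := hT.2.2.1 (Mc, q) (cn, rn) hκD hνD (by rw [h, hνn])
        rw [Prod.mk.injEq] at heq
        omega
      · exact h
    obtain ⟨z1, hz1D, hz1⟩ := hT.2.2.2.1 (T (Mc, q) + 1) (by omega) (by omega)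
    obtain ⟨a1, b1⟩ := z1
    -- the entry following the entry of κ lies strictly right of column Mc
    have ha1 : Mc < a1 := by
      by_contra h
      push_neg at h
      rcases eq_or_lt_of_le h with hMa | hMa
      · have hbq : b1 ≠ q := by
          intro hb
          rw [hMa, hb] at hz1
          omega
        have h1 := hκmax' b1 (by rw [← hMa]; exact hz1D) hbq
        rw [hMa] at hz1
        omega
      · obtain ⟨hd1, hbe, hor⟩ := YRS.source_obstruction n α T hT hsrc
          (T (Mc, q)) hm.1 hmn Mc q a1 b1 hκD rfl hz1D hz1 hMa
        rcases hor with hnd | hgt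
        · have hlt : α.getD (b1 - 1) 0 < Mc := by
            by_contra hge
            push_neg at hge
            exact hnd (YRS.mem_diagram α hz1D.1 hz1D.2.1 (by omega) hge)
          have hub : a1 ≤ α.getD (b1 - 1) 0 := hz1D.2.2.2
          rcases hκcase with htop | ⟨_, hno⟩
          · have := hz1D.2.1; omega
          · exact hno b1 hbe hz1D.2.1 (by omega)
        · have hDm : YRS.inDiagram α (Mc, b1) := by
            by_contra hD
            rw [hT.1 _ hD] at hgt
            omega
          have hbq : b1 ≠ q := by omega
          have := hκmax' b1 hDm hbq
          omega
    -- the largest entry living strictly right of column Mc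
    set F := (Finset.Icc 1 n).filter (fun v => Mc < (YRS.cellOf α T v).1) with hF
    have hc1 : YRS.cellOf α T (T (Mc, q) + 1) = (a1, b1) := YRS.cellOf_eq hT hz1D hz1
    have hmem : T (Mc, q) + 1 ∈ F := by
      rw [hF, Finset.mem_filter, Finset.mem_Icc]
      exact ⟨⟨by omega, by omega⟩, by rw [hc1]; exact ha1⟩
    have hFne : F.Nonempty := ⟨_, hmem⟩
    set v := F.max' hFne with hvdef
    have hvF : v ∈ F := F.max'_mem hFne
    rw [hF, Finset.mem_filter, Finset.mem_Icc] at hvF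
    obtain ⟨⟨hv1, hvn⟩, hvcol⟩ := hvF
    have hvge : T (Mc, q) + 1 ≤ v := F.le_max' _ hmem
    obtain ⟨z2, hz2D, hz2⟩ := hT.2.2.2.1 v hv1 hvn
    obtain ⟨a2, b2⟩ := z2
    have hc2 : YRS.cellOf α T v = (a2, b2) := YRS.cellOf_eq hT hz2D hz2
    have hvcol' : Mc < a2 := by rw [hc2] at hvcol; exact hvcol
    have hvltn : v < n := by
      rcases eq_or_lt_of_le hvn with h | h
      · exfalso
        have hh := hT.2.2.1 _ _ hz2D hνD (by rw [hz2, h, hνn])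
        rw [Prod.mk.injEq] at hh
        omega
      · exact h
    obtain ⟨z3, hz3D, hz3⟩ := hT.2.2.2.1 (v + 1) (by omega) (by omega)
    obtain ⟨a3, b3⟩ := z3
    have hc3 : YRS.cellOf α T (v + 1) = (a3, b3) := YRS.cellOf_eq hT hz3D hz3
    have ha3 : a3 ≤ Mc := by
      by_contra h
      push_neg at h
      have hmem3 : v + 1 ∈ F := by
        rw [hF, Finset.mem_filter, Finset.mem_Icc]
        exact ⟨⟨by omega, by omega⟩, by rw [hc3]; exact h⟩
      have := F.le_max' _ hmem3
      omega
    obtain ⟨hd1, hbe, hor⟩ := YRS.source_obstruction n α T hT hsrc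
      v hv1 hvltn a2 b2 a3 b3 hz2D hz2 hz3D hz3 (by omega)
    have ha3M : a3 = Mc := by omega
    by_cases hb3 : b3 = q
    · have hzz : T (Mc, q) = v + 1 := by rw [← ha3M, ← hb3]; exact hz3
      omega
    · have h1 := hκmax' b3 (by rw [← ha3M]; exact hz3D) hb3
      have hz3' : T (Mc, b3) = v + 1 := by rw [← ha3M]; exact hz3
      omega
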